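/- arXiv:1502.06780 — 8 statements merged into one kernel-verified Lean document; each statement's English description precedes it below -/
import Mathlib

section
/- Fix p ∈ (0,1). For each integer n ≥ 2 let P_n denote the Poisson distribution with mean −n·log(p). Then: (i) for every y ∈ (p,1), lim_{n→∞} (1/n)·log P_n({j ∈ ℕ : (1−1/n)^j ≥ y}) = −I(y); (ii) for every y ∈ (0,p), lim_{n→∞} (1/n)·log P_n({j ∈ ℕ : (1−1/n)^j ≤ y}) = −I(y). -/
open Filter ProbabilityTheory

/-!
Write `l = -log p`, `a = -log y` and `c = 1 - 1/n`. The event `y ≤ c ^ J` is `J ≤ ⌊log y / log c⌋₊`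
and `c ^ J ≤ y` is `J ≥ ⌈log y / log c⌉₊`, with thresholds `K n ~ n a`; as `a < l` in (i) and
`a > l` in (ii), both are deviations of `J ~ Po(n l)` away from its mean. The Chernoff bound with
the Poisson moment generating function gives `P ≤ exp (-Λ(n l, K n))` for the Poisson Cramér rate
function `Λ`, and the single atom at `K n` together with Stirling's bound on `(K n)!` gives
`P ≥ exp (-Λ(n l, K n) - O(log n))`. Since `Λ(n l, K n) = n Λ(l, K n / n)`, dividing by `n` leaves
`-Λ(l, a)`, which is `-I(y)`.
-/

/-- The AMS rate function `I` with parameter `p`, defined on `(0,1)`. -/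
noncomputable def amsRate (p y : ℝ) : ℝ :=
  Real.log y * Real.log (Real.log p / Real.log y) + Real.log (y / p)

open Real MeasureTheory Set
open scoped NNReal Nat Topology

/-- The Cramér rate function of the Poisson distribution with mean `μ`. -/
noncomputable def poissonRate (μ x : ℝ) : ℝ :=
  x * log (x / μ) - x + μ

lemma poissonRate_natCast_mul {n : ℕ} (hn : n ≠ 0) (l x : ℝ) :
    poissonRate (n * l) x = n * poissonRate l (x / n) := by
  have hn' : (n : ℝ) ≠ 0 := Nat.cast_ne_zero.2 hn
  simp only [poissonRate, div_div, mul_comm (n : ℝ) l]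
  field_simp

lemma amsRate_eq_poissonRate {p y : ℝ} (hp : p ≠ 0) (hy : y ≠ 0) :
    amsRate p y = poissonRate (-log p) (-log y) := by
  rw [amsRate, poissonRate, neg_div_neg_eq, log_div hy hp, ← inv_div, log_inv]
  ring

lemma tendsto_poissonRate {l a : ℝ} (hl : l ≠ 0) (ha : a ≠ 0) {f : ℕ → ℝ}
    (hf : Tendsto f atTop (𝓝 a)) :
    Tendsto (fun n => poissonRate l (f n)) atTop (𝓝 (poissonRate l a)) :=
  ((hf.mul ((hf.div_const l).log (div_ne_zero ha hl))).sub hf).add_const l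

lemma log_factorial_le_stirling {n : ℕ} (hn : n ≠ 0) :
    log n ! ≤ n * log n - n + log n / 2 + 1 := by
  obtain ⟨m, rfl⟩ := Nat.exists_eq_add_one_of_ne_zero hn
  have hm : (0 : ℝ) < (m + 1 : ℕ) := by positivity
  have hseq : log (Stirling.stirlingSeq (m + 1)) ≤ 1 - log 2 / 2 := by
    have := Stirling.stirlingSeq'_antitone (Nat.zero_le m)
    simp only [Function.comp, Nat.succ_eq_add_one, zero_add, Stirling.stirlingSeq_one] at this
    calc log (Stirling.stirlingSeq (m + 1)) ≤ log (exp 1 / √2) :=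
          log_le_log (Stirling.stirlingSeq'_pos m) this
      _ = 1 - log 2 / 2 := by
          rw [log_div (exp_ne_zero 1) (by positivity), log_exp, log_sqrt (by norm_num)]
  rw [Stirling.log_stirlingSeq_formula, log_mul (by norm_num) hm.ne',
    log_div hm.ne' (exp_ne_zero 1), log_exp] at hseq
  linarith

lemma le_log_poissonMeasure_real_singleton {r : ℝ≥0} (hr : 0 < r) {k : ℕ} (hk : k ≠ 0) :
    -poissonRate r k - (log k / 2 + 1) ≤ log (Po(r).real {k}) := by
  have hk' : (0 : ℝ) < k := Nat.cast_pos.2 (Nat.pos_of_ne_zero hk)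
  rw [poissonMeasure_real_singleton, log_div (by positivity) (by positivity),
    log_mul (exp_ne_zero _) (by positivity), log_exp, log_pow, poissonRate,
    log_div hk'.ne' (NNReal.coe_pos.2 hr).ne']
  linarith [log_factorial_le_stirling hk]

lemma exp_neg_mul_pow_div_factorial_mul_exp (r : ℝ≥0) (t : ℝ) (n : ℕ) :
    exp (-r) * r ^ n / n ! * exp (t * n) = exp (-r) * ((r * exp t) ^ n / n !) := by
  rw [mul_pow, ← exp_nat_mul, mul_comm (n : ℝ) t]
  ring

lemma integrable_exp_mul_poissonMeasure (r : ℝ≥0) (t : ℝ) :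
    Integrable (fun n : ℕ => exp (t * n)) Po(r) := by
  simp only [integrable_poissonMeasure_iff, norm_of_nonneg (exp_pos _).le,
    exp_neg_mul_pow_div_factorial_mul_exp]
  exact (summable_pow_div_factorial _).mul_left _

lemma mgf_poissonMeasure (r : ℝ≥0) (t : ℝ) :
    mgf (fun n : ℕ => (n : ℝ)) Po(r) t = exp (r * (exp t - 1)) := by
  have hexp : HasSum (fun n : ℕ => (r * exp t) ^ n / n !) (exp (r * exp t)) := by
    rw [exp_eq_exp_ℝ]; exact NormedSpace.expSeries_div_hasSum_exp _
  rw [mgf, integral_poissonMeasure]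
  simp only [smul_eq_mul, exp_neg_mul_pow_div_factorial_mul_exp]
  rw [(hexp.mul_left _).tsum_eq, ← exp_add]
  ring_nf

lemma exp_mul_mgf_poissonMeasure_log_div {r : ℝ≥0} (hr : 0 < r) {x : ℝ} (hx : 0 < x) :
    exp (-log (x / r) * x) * mgf (fun n : ℕ => (n : ℝ)) Po(r) (log (x / r)) =
      exp (-poissonRate r x) := by
  have hr' : (0 : ℝ) < r := hr
  rw [mgf_poissonMeasure, exp_log (by positivity), ← exp_add, poissonRate]
  congr 1
  field_simp
  ring

lemma poissonMeasure_real_Iic_le {r : ℝ≥0} (hr : 0 < r) {k : ℕ} (hk : k ≠ 0)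
    (hkr : k ≤ (r : ℝ)) :
    Po(r).real (Iic k) ≤ exp (-poissonRate r k) := by
  have hk' : (0 : ℝ) < k := Nat.cast_pos.2 (Nat.pos_of_ne_zero hk)
  have ht : log (k / r) ≤ 0 := log_nonpos (by positivity) ((div_le_one (by positivity)).2 hkr)
  rw [← exp_mul_mgf_poissonMeasure_log_div hr hk']
  convert measure_le_le_exp_mul_mgf (k : ℝ) ht (integrable_exp_mul_poissonMeasure r _) using 3
  ext n
  simp

lemma poissonMeasure_real_Ici_le {r : ℝ≥0} (hr : 0 < r) {k : ℕ} (hrk : (r : ℝ) ≤ k) :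
    Po(r).real (Ici k) ≤ exp (-poissonRate r k) := by
  have hk' : (0 : ℝ) < k := (NNReal.coe_pos.2 hr).trans_le hrk
  have ht : 0 ≤ log (k / r) := log_nonneg ((one_le_div (by positivity)).2 hrk)
  rw [← exp_mul_mgf_poissonMeasure_log_div hr hk']
  convert measure_ge_le_exp_mul_mgf (k : ℝ) ht (integrable_exp_mul_poissonMeasure r _) using 3
  ext n
  simp

lemma log_poissonMeasure_real_mem_Icc {r : ℝ≥0} (hr : 0 < r) {k : ℕ} (hk : k ≠ 0) {S : Set ℕ}
    (hkS : k ∈ S) (hS : Po(r).real S ≤ exp (-poissonRate r k)) :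
    log (Po(r).real S) ∈ Icc (-poissonRate r k - (log k / 2 + 1)) (-poissonRate r k) := by
  have hpos : 0 < Po(r).real {k} := poissonMeasure_real_singleton_pos k hr
  have hmono : Po(r).real {k} ≤ Po(r).real S := measureReal_mono (singleton_subset_iff.2 hkS)
  refine ⟨(le_log_poissonMeasure_real_singleton hr hk).trans (log_le_log hpos hmono), ?_⟩
  rw [← log_exp (-poissonRate r k)]
  exact log_le_log (hpos.trans_le hmono) hS

lemma tendsto_log_div_natCast_of_tendsto_div {a : ℝ} (ha : 0 < a) {x : ℕ → ℝ}
    (hx : Tendsto (fun n => x n / n) atTop (𝓝 a)) :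
    Tendsto (fun n => log (x n) / n) atTop (𝓝 0) := by
  have hlog_n : Tendsto (fun n : ℕ => log n / n) atTop (𝓝 0) :=
    isLittleO_log_id_atTop.tendsto_div_nhds_zero.comp tendsto_natCast_atTop_atTop
  have hsplit := (hx.log ha.ne').mul tendsto_one_div_atTop_nhds_zero_nat |>.add hlog_n
  rw [mul_zero, zero_add] at hsplit
  refine hsplit.congr' ?_
  filter_upwards [hx.eventually_const_lt ha, eventually_ne_atTop 0] with n hxn hn
  have hn' : (n : ℝ) ≠ 0 := Nat.cast_ne_zero.2 hn
  have hxn' : x n ≠ 0 := by rintro h; simp [h] at hxn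
  rw [log_div hxn' hn']
  field_simp
  ring

lemma tendsto_log_poissonMeasure_real_div {l a : ℝ} (hl : 0 < l) (ha : 0 < a)
    {r : ℕ → ℝ≥0} (hr : ∀ n, (r n : ℝ) = n * l) {K : ℕ → ℕ} {S : ℕ → Set ℕ}
    (hK : Tendsto (fun n => (K n : ℝ) / n) atTop (𝓝 a)) (hKS : ∀ᶠ n in atTop, K n ∈ S n)
    (hS : ∀ᶠ n in atTop, Po(r n).real (S n) ≤ exp (-poissonRate (r n) (K n))) :
    Tendsto (fun n : ℕ => 1 / (n : ℝ) * log (Po(r n).real (S n))) atTop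
      (𝓝 (-poissonRate l a)) := by
  have hupper := (tendsto_poissonRate hl.ne' ha.ne' hK).neg
  have hlower := hupper.sub (((tendsto_log_div_natCast_of_tendsto_div ha hK).div_const 2).add
    tendsto_one_div_atTop_nhds_zero_nat)
  rw [zero_div, zero_add, sub_zero] at hlower
  have hbounds : ∀ᶠ n : ℕ in atTop, 1 / (n : ℝ) * log (Po(r n).real (S n)) ∈
      Icc (-poissonRate l (K n / n) - (log (K n) / n / 2 + 1 / n))
        (-poissonRate l (K n / n)) := by
    filter_upwards [hK.eventually_const_lt ha, eventually_ne_atTop 0, hKS, hS]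
      with n hKn hn hKSn hSn
    have hn' : (0 : ℝ) < n := Nat.cast_pos.2 (Nat.pos_of_ne_zero hn)
    have hK0 : K n ≠ 0 := by rintro h; simp [h] at hKn
    have hrn : 0 < r n := by rw [← NNReal.coe_pos, hr]; positivity
    have hIcc := log_poissonMeasure_real_mem_Icc hrn hK0 hKSn hSn
    rw [hr, poissonRate_natCast_mul hn] at hIcc
    constructor
    · rw [one_div_mul_eq_div, le_div_iff₀ hn']
      convert hIcc.1 using 1
      field_simp
    · rw [one_div_mul_eq_div, div_le_iff₀ hn']
      linarith [hIcc.2]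
  exact tendsto_of_tendsto_of_tendsto_of_le_of_le' hlower hupper
    (hbounds.mono fun _ h => h.1) (hbounds.mono fun _ h => h.2)

section PoissonTails

variable {l a : ℝ} {r : ℕ → ℝ≥0} {K : ℕ → ℕ}

lemma tendsto_log_poissonMeasure_real_Iic (ha : 0 < a) (hal : a < l)
    (hr : ∀ n, (r n : ℝ) = n * l) (hK : Tendsto (fun n => (K n : ℝ) / n) atTop (𝓝 a)) :
    Tendsto (fun n : ℕ => 1 / (n : ℝ) * log (Po(r n).real (Iic (K n)))) atTop
      (𝓝 (-poissonRate l a)) := by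
  refine tendsto_log_poissonMeasure_real_div (ha.trans hal) ha hr hK
    (Eventually.of_forall fun n => self_mem_Iic) ?_
  filter_upwards [hK.eventually_const_lt ha, hK.eventually_lt_const hal, eventually_ne_atTop 0]
    with n hKa hKl hn
  have hn' : (0 : ℝ) < n := Nat.cast_pos.2 (Nat.pos_of_ne_zero hn)
  have hK0 : K n ≠ 0 := by rintro h; simp [h] at hKa
  have hrn : 0 < r n := by rw [← NNReal.coe_pos, hr]; exact mul_pos hn' (ha.trans hal)
  refine poissonMeasure_real_Iic_le hrn hK0 ?_
  rw [hr, ← div_le_iff₀' hn']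
  exact hKl.le

lemma tendsto_log_poissonMeasure_real_Ici (hl : 0 < l) (hla : l < a)
    (hr : ∀ n, (r n : ℝ) = n * l) (hK : Tendsto (fun n => (K n : ℝ) / n) atTop (𝓝 a)) :
    Tendsto (fun n : ℕ => 1 / (n : ℝ) * log (Po(r n).real (Ici (K n)))) atTop
      (𝓝 (-poissonRate l a)) := by
  refine tendsto_log_poissonMeasure_real_div hl (hl.trans hla) hr hK
    (Eventually.of_forall fun n => self_mem_Ici) ?_
  filter_upwards [hK.eventually_const_lt hla, eventually_ne_atTop 0] with n hKl hn
  have hn' : (0 : ℝ) < n := Nat.cast_pos.2 (Nat.pos_of_ne_zero hn)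
  have hrn : 0 < r n := by rw [← NNReal.coe_pos, hr]; positivity
  refine poissonMeasure_real_Ici_le hrn ?_
  rw [hr, ← le_div_iff₀' hn']
  exact hKl.le

end PoissonTails

lemma setOf_le_pow_eq_Iic {c y : ℝ} (hc0 : 0 < c) (hc1 : c < 1) (hy0 : 0 < y) (hy1 : y ≤ 1) :
    {j : ℕ | y ≤ c ^ j} = Iic ⌊log y / log c⌋₊ := by
  have hlogc : log c < 0 := log_neg hc0 hc1
  ext j
  rw [mem_ofPred_eq, mem_Iic, Nat.le_floor_iff (div_nonneg_of_nonpos (log_nonpos hy0.le hy1)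
    hlogc.le), le_div_iff_of_neg hlogc, ← log_pow, log_le_log_iff hy0 (pow_pos hc0 j)]

lemma setOf_pow_le_eq_Ici {c y : ℝ} (hc0 : 0 < c) (hc1 : c < 1) (hy0 : 0 < y) :
    {j : ℕ | c ^ j ≤ y} = Ici ⌈log y / log c⌉₊ := by
  ext j
  rw [mem_ofPred_eq, mem_Ici, Nat.ceil_le, div_le_iff_of_neg (log_neg hc0 hc1), ← log_pow,
    log_le_log_iff (pow_pos hc0 j) hy0]

lemma one_sub_one_div_mem_Ioo {n : ℕ} (hn : 1 < n) : 1 - 1 / (n : ℝ) ∈ Ioo 0 1 := by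
  have hn' : (1 : ℝ) < n := Nat.one_lt_cast.2 hn
  constructor
  · rw [sub_pos, div_lt_one (zero_lt_one.trans hn')]
    exact hn'
  · linarith [one_div_pos.2 (zero_lt_one.trans hn')]

lemma tendsto_div_log_one_sub_one_div_div (x : ℝ) :
    Tendsto (fun n : ℕ => x / log (1 - 1 / n) / n) atTop (𝓝 (-x)) := by
  have h : Tendsto (fun n : ℕ => (n : ℝ) * log (1 - 1 / n)) atTop (𝓝 (-1)) := by
    simpa only [Function.comp_def, neg_div, ← sub_eq_add_neg] using
      (tendsto_mul_log_one_add_div_atTop (-1)).comp tendsto_natCast_atTop_atTop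
  have h' := (tendsto_const_nhds (x := x)).div h (by norm_num)
  rw [div_neg, div_one] at h'
  exact h'.congr fun n => by rw [Pi.div_apply, div_div, mul_comm]

lemma tendsto_comp_div_natCast {g : ℝ → ℝ} (hg : Tendsto (fun x => g x / x) atTop (𝓝 1))
    {b : ℕ → ℝ} {a : ℝ} (ha : 0 < a) (hb : Tendsto (fun n => b n / n) atTop (𝓝 a)) :
    Tendsto (fun n => g (b n) / n) atTop (𝓝 a) := by
  have hb_top : Tendsto b atTop atTop := by
    refine (hb.pos_mul_atTop ha tendsto_natCast_atTop_atTop).congr' ?_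
    filter_upwards [eventually_ne_atTop 0] with n hn
    field_simp
  have h := (hg.comp hb_top).mul hb
  rw [one_mul] at h
  refine h.congr' ?_
  filter_upwards [hb_top.eventually_gt_atTop 0] with n hn
  simp only [Function.comp]
  field_simp

/-- One-sided large deviations for the AMS(n,1) estimator `p̂^{n,1} = (1−1/n)^{J^{n,1}}`,
where `J^{n,1}` is Poisson with mean `−n log p`:
(i) for `y ∈ (p,1)`, `(1/n)·log P((1−1/n)^{J} ≥ y) → −I(y)`;
(ii) for `y ∈ (0,p)`, `(1/n)·log P((1−1/n)^{J} ≤ y) → −I(y)`. -/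
theorem tendsto_log_poisson_deviation (p : ℝ) (hp : p ∈ Set.Ioo (0 : ℝ) 1) :
    (∀ y : ℝ, y ∈ Set.Ioo p 1 →
      Tendsto (fun n : ℕ =>
        (1 / (n : ℝ)) * Real.log
          ((poissonMeasure (Real.toNNReal (-(n : ℝ) * Real.log p)))
            {j : ℕ | y ≤ (1 - 1 / (n : ℝ)) ^ j}).toReal)
        atTop (nhds (-amsRate p y))) ∧
    (∀ y : ℝ, y ∈ Set.Ioo (0 : ℝ) p →
      Tendsto (fun n : ℕ =>
        (1 / (n : ℝ)) * Real.log
          ((poissonMeasure (Real.toNNReal (-(n : ℝ) * Real.log p)))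
            {j : ℕ | (1 - 1 / (n : ℝ)) ^ j ≤ y}).toReal)
        atTop (nhds (-amsRate p y))) := by
  obtain ⟨hp0, hp1⟩ := hp
  have hr (n : ℕ) : ((-(n : ℝ) * log p).toNNReal : ℝ) = n * -log p := by
    rw [neg_mul, ← mul_neg,
      coe_toNNReal _ (mul_nonneg n.cast_nonneg (neg_nonneg.2 (log_nonpos hp0.le hp1.le)))]
  have hc : ∀ᶠ n : ℕ in atTop, 1 - 1 / (n : ℝ) ∈ Ioo 0 1 :=
    (eventually_gt_atTop 1).mono fun _ => one_sub_one_div_mem_Ioo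
  constructor
  · rintro y ⟨hpy, hy1⟩
    have hy0 := hp0.trans hpy
    have ha : 0 < -log y := neg_pos.2 (log_neg hy0 hy1)
    have hK := tendsto_comp_div_natCast (g := fun x => (⌊x⌋₊ : ℝ)) tendsto_nat_floor_div_atTop
      ha (tendsto_div_log_one_sub_one_div_div (log y))
    rw [amsRate_eq_poissonRate hp0.ne' hy0.ne']
    refine (tendsto_log_poissonMeasure_real_Iic ha (neg_lt_neg (log_lt_log hp0 hpy)) hr
      hK).congr' ?_
    filter_upwards [hc] with n hcn
    rw [setOf_le_pow_eq_Iic hcn.1 hcn.2 hy0 hy1.le]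
    rfl
  · rintro y ⟨hy0, hyp⟩
    have ha : 0 < -log y := neg_pos.2 (log_neg hy0 (hyp.trans hp1))
    have hK := tendsto_comp_div_natCast (g := fun x => (⌈x⌉₊ : ℝ)) tendsto_nat_ceil_div_atTop
      ha (tendsto_div_log_one_sub_one_div_div (log y))
    rw [amsRate_eq_poissonRate hp0.ne' hy0.ne']
    refine (tendsto_log_poissonMeasure_real_Ici (neg_pos.2 (log_neg hp0 hp1))
      (neg_lt_neg (log_lt_log hy0 hyp)) hr hK).congr' ?_
    filter_upwards [hc] with n hcn
    rw [setOf_pow_le_eq_Ici hcn.1 hcn.2 hy0]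
    rfl
end

section
/- Fix p ∈ (0,1) and λ ∈ ℝ. For each integer n ≥ 2 let P_n denote the Poisson distribution with mean −n·log(p). Then lim_{n→∞} (1/n)·log( Σ_{j=0}^∞ P_n({j})·exp(n·λ·j·log(1−1/n)) ) = −log(p)·(exp(−λ) − 1). (This is the scaled log-Laplace transform of log(p̂^{n,1}) = J^{n,1}·log(1−1/n) evaluated at nλ, and its limit Λ(λ).) -/
open Filter Real Topology
open scoped Nat

/-! Since `exp (n λ j log (1 - 1/n)) = e^{t_n j}` with `t_n = n λ log (1 - 1/n)`, the sum is the
moment generating function of a Poisson law of mean `μ = -n log p` at `t_n`, namely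
`exp (μ (e^{t_n} - 1))`. Hence the scaled log-Laplace transform equals `-log p · (e^{t_n} - 1)`
exactly, and `t_n → -λ` because `n log (1 - 1/n) → -1`. -/

theorem tsum_poisson_mul_exp_mul (μ t : ℝ) :
    ∑' j : ℕ, exp (-μ) * μ ^ j / j ! * exp (t * j) = exp (μ * (exp t - 1)) := by
  have hterm (j : ℕ) :
      exp (-μ) * μ ^ j / j ! * exp (t * j) = exp (-μ) * ((μ * exp t) ^ j / j !) := by
    rw [mul_comm t, exp_nat_mul, mul_pow]
    ring
  rw [tsum_congr hterm, tsum_mul_left, ← congrFun NormedSpace.exp_eq_tsum_div, ← exp_eq_exp_ℝ,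
    ← exp_add]
  ring_nf

theorem log_tsum_poisson_mul_exp_mul (μ t : ℝ) :
    log (∑' j : ℕ, exp (-μ) * μ ^ j / j ! * exp (t * j)) = μ * (exp t - 1) := by
  rw [tsum_poisson_mul_exp_mul, log_exp]

theorem tendsto_natCast_mul_log_one_sub_one_div :
    Tendsto (fun n : ℕ => (n : ℝ) * log (1 - 1 / n)) atTop (𝓝 (-1)) := by
  simpa [Function.comp_def, sub_eq_add_neg, neg_div] using
    (tendsto_mul_log_one_add_div_atTop (-1)).comp tendsto_natCast_atTop_atTop

theorem tendsto_scaled_logLaplace_AMS_k_one_general (p l : ℝ) :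
    Tendsto (fun n : ℕ =>
      (1 / (n : ℝ)) * Real.log (∑' j : ℕ,
        Real.exp (-(-(n : ℝ) * Real.log p)) * (-(n : ℝ) * Real.log p) ^ j /
          (Nat.factorial j) *
        Real.exp ((n : ℝ) * l * (j : ℝ) * Real.log (1 - 1 / (n : ℝ)))))
      atTop (nhds (-Real.log p * (Real.exp (-l) - 1))) := by
  set t : ℕ → ℝ := fun n => n * log (1 - 1 / n) * l
  have ht : Tendsto t atTop (𝓝 (-l)) := by
    simpa only [neg_one_mul] using tendsto_natCast_mul_log_one_sub_one_div.mul_const l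
  have hexact : ∀ᶠ n : ℕ in atTop, -log p * (exp (t n) - 1) =
      (1 / (n : ℝ)) * log (∑' j : ℕ, exp (-(-(n : ℝ) * log p)) * (-(n : ℝ) * log p) ^ j /
        j ! * exp (n * l * j * log (1 - 1 / n))) := by
    filter_upwards [eventually_ne_atTop 0] with n hn
    have hexp (j : ℕ) : (n : ℝ) * l * j * log (1 - 1 / n) = t n * j := by ring
    simp_rw [hexp, log_tsum_poisson_mul_exp_mul]
    field_simp
  exact (((continuous_exp.tendsto _).comp ht).sub_const 1 |>.const_mul _).congr' hexact

/-- The scaled log-Laplace transform of `log p̂^{n,1} = J^{n,1}·log(1−1/n)` at `nλ`,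
where `J^{n,1}` is Poisson with mean `−n log p`, converges to
`Λ(λ) = −log(p)·(exp(−λ) − 1)`. -/
theorem tendsto_scaled_logLaplace_AMS_k_one (p l : ℝ) (hp : p ∈ Set.Ioo (0 : ℝ) 1) :
    Tendsto (fun n : ℕ =>
      (1 / (n : ℝ)) * Real.log (∑' j : ℕ,
        Real.exp (-(-(n : ℝ) * Real.log p)) * (-(n : ℝ) * Real.log p) ^ j /
          (Nat.factorial j) *
        Real.exp ((n : ℝ) * l * (j : ℝ) * Real.log (1 - 1 / (n : ℝ)))))
      atTop (nhds (-Real.log p * (Real.exp (-l) - 1))) :=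
  tendsto_scaled_logLaplace_AMS_k_one_general p l
end

section
/- Fix p ∈ (0,1). Then I(p) = 0, and I(y) > 0 for every y ∈ (0,1) with y ≠ p; in particular p is the unique minimizer of I on (0,1). -/
/-- `I(p) = 0` and `I(y) > 0` for every `y ∈ (0,1)` with `y ≠ p`:
`p` is the unique minimizer of `I` on `(0,1)`. -/
theorem amsRate_eq_zero_iff (p : ℝ) (hp : p ∈ Set.Ioo (0 : ℝ) 1) :
    amsRate p p = 0 ∧
      ∀ y ∈ Set.Ioo (0 : ℝ) 1, y ≠ p → 0 < amsRate p y := by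
  obtain ⟨hp0, hp1⟩ := hp
  have hbn : Real.log p < 0 := Real.log_neg hp0 hp1
  constructor
  · have : Real.log p / Real.log p = 1 := div_self hbn.ne
    simp [amsRate, this, div_self hp0.ne']
  · rintro y ⟨hy0, hy1⟩ hyp
    have han : Real.log y < 0 := Real.log_neg hy0 hy1
    set a := Real.log y with ha
    set b := Real.log p with hb
    have hab : a ≠ b := by
      intro h
      apply hyp
      have := congrArg Real.exp h
      rwa [Real.exp_log hy0, Real.exp_log hp0] at this
    have ht0 : 0 < b / a := div_pos_of_neg_of_neg hbn han
    have ht1 : b / a ≠ 1 := by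
      intro h
      exact hab ((div_eq_one_iff_eq han.ne).mp h).symm
    have hlog : Real.log (b / a) < b / a - 1 := Real.log_lt_sub_one_of_pos ht0 ht1
    have hrw : amsRate p y = a * (Real.log (b / a) + 1 - b / a) := by
      have hba : a * (b / a) = b := by rw [mul_div_assoc'] at *; exact mul_div_cancel_left₀ b han.ne
      rw [amsRate, Real.log_div hy0.ne' hp0.ne', mul_sub, mul_add, mul_one, hba]
      ring
    rw [hrw]
    have : Real.log (b / a) + 1 - b / a < 0 := by linarith
    exact mul_pos_of_neg_of_neg han this
end

section
/- Fix p ∈ (0,1). For every y ∈ (0,1) one has I(y) ≥ 𝓘(y), with equality if and only if y = p. -/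
/-- The Cramér rate function of the Bernoulli(p) distribution on `(0,1)`. -/
noncomputable def cramerRate (p y : ℝ) : ℝ :=
  y * Real.log (y / p) + (1 - y) * Real.log ((1 - y) / (1 - p))

open Real Set

lemma apply_lt_apply_of_hasDerivAt_sign_change {f f' : ℝ → ℝ} {s : Set ℝ} [s.OrdConnected]
    (hf : ∀ x ∈ s, HasDerivAt f (f' x) x) {c : ℝ} (hc : c ∈ s)
    (hneg : ∀ x ∈ s, x < c → f' x < 0) (hpos : ∀ x ∈ s, c < x → 0 < f' x)
    {x : ℝ} (hx : x ∈ s) (hxc : x ≠ c) : f c < f x := by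
  have hcont : ∀ {a b}, a ∈ s → b ∈ s → ContinuousOn f (Icc a b) := fun ha hb z hz =>
    (hf z (Set.Icc_subset s ha hb hz)).continuousAt.continuousWithinAt
  rcases hxc.lt_or_gt with hlt | hgt
  · obtain ⟨ξ, hξ, hslope⟩ := exists_hasDerivAt_eq_slope f f' hlt (hcont hx hc)
      fun z hz => hf z (Set.Icc_subset s hx hc (Ioo_subset_Icc_self hz))
    have := hneg ξ (Set.Icc_subset s hx hc (Ioo_subset_Icc_self hξ)) hξ.2
    rw [hslope, div_neg_iff] at this
    rcases this with h | h <;> linarith [h.1, h.2]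
  · obtain ⟨ξ, hξ, hslope⟩ := exists_hasDerivAt_eq_slope f f' hgt (hcont hc hx)
      fun z hz => hf z (Set.Icc_subset s hc hx (Ioo_subset_Icc_self hz))
    have := hpos ξ (Set.Icc_subset s hc hx (Ioo_subset_Icc_self hξ)) hξ.1
    rw [hslope, div_pos_iff] at this
    rcases this with h | h <;> linarith [h.1, h.2]

lemma Real.log_mul_one_sub_lt {q y : ℝ} (hq : 0 < q) (hqy : q < y) (hy : y < 1) :
    log q * (1 - y) < log y * (1 - q) := by
  have h1q : 0 < 1 - q := by linarith
  have hw : 0 < (1 - y) / (1 - q) := div_pos (by linarith) h1q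
  have hw' : 0 < (y - q) / (1 - q) := div_pos (by linarith) h1q
  have := strictConcaveOn_log_Ioi.2 (mem_Ioi.2 hq) (mem_Ioi.2 one_pos) (by linarith) hw hw'
    (by field_simp; ring)
  have hy' : (1 - y) / (1 - q) * q + (y - q) / (1 - q) * 1 = y := by field_simp; ring
  simp only [smul_eq_mul, hy', log_one, mul_zero, add_zero] at this
  rwa [div_mul_eq_mul_div, div_lt_iff₀ h1q, mul_comm] at this

@[simp] lemma amsRate_self (y : ℝ) : amsRate y y = 0 := by
  simp [amsRate]

@[simp] lemma cramerRate_self (y : ℝ) : cramerRate y y = 0 := by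
  by_cases h : y = 0 <;> by_cases h' : 1 - y = 0 <;> simp [cramerRate, h, h']

lemma hasDerivAt_amsRate_left {q y : ℝ} (hq : log q ≠ 0) (hy : log y ≠ 0) :
    HasDerivAt (fun q => amsRate q y) ((log y / log q - 1) / q) q := by
  have hq0 : q ≠ 0 := by rintro rfl; simp at hq
  have hy0 : y ≠ 0 := by rintro rfl; simp at hy
  have h1 := (((hasDerivAt_log hq0).div_const (log y)).log (div_ne_zero hq hy)).const_mul (log y)
  have h2 := ((hasDerivAt_const q y).div (hasDerivAt_id' q) hq0).log (div_ne_zero hy0 hq0)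
  refine (h1.add h2).congr_deriv ?_
  simp only [Pi.div_apply]
  field_simp
  ring

lemma hasDerivAt_cramerRate_left {q y : ℝ} (hq0 : q ≠ 0) (hq1 : q ≠ 1) (hy0 : y ≠ 0)
    (hy1 : y ≠ 1) : HasDerivAt (fun q => cramerRate q y) ((1 - y) / (1 - q) - y / q) q := by
  have hq1' : 1 - q ≠ 0 := sub_ne_zero.2 hq1.symm
  have hy1' : 1 - y ≠ 0 := sub_ne_zero.2 hy1.symm
  have h1 := (((hasDerivAt_const q y).div (hasDerivAt_id' q) hq0).log
    (div_ne_zero hy0 hq0)).const_mul y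
  have h2 := (((hasDerivAt_const q (1 - y)).div ((hasDerivAt_id' q).const_sub 1) hq1').log
    (div_ne_zero hy1' hq1')).const_mul (1 - y)
  refine (h1.add h2).congr_deriv ?_
  simp only [Pi.div_apply]
  field_simp
  ring

lemma hasDerivAt_amsRate_sub_cramerRate_left {q y : ℝ} (hq : q ∈ Ioo 0 1) (hy : y ∈ Ioo 0 1) :
    HasDerivAt (fun q => amsRate q y - cramerRate q y)
      ((log q * (1 - y) - log y * (1 - q)) / (q * (1 - q) * -log q)) q := by
  have hlogq := log_neg hq.1 hq.2
  have hlogy := log_neg hy.1 hy.2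
  refine ((hasDerivAt_amsRate_left hlogq.ne hlogy.ne).sub
    (hasDerivAt_cramerRate_left hq.1.ne' hq.2.ne hy.1.ne' hy.2.ne)).congr_deriv ?_
  have : 1 - q ≠ 0 := by linarith [hq.2]
  have := hq.1.ne'
  have := hlogq.ne
  field_simp
  ring

/-- For every `y ∈ (0,1)`, `I(y) ≥ 𝓘(y)`, with equality iff `y = p`. -/
theorem amsRate_ge_cramerRate (p : ℝ) (hp : p ∈ Set.Ioo (0 : ℝ) 1) :
    ∀ y ∈ Set.Ioo (0 : ℝ) 1,
      cramerRate p y ≤ amsRate p y ∧ (amsRate p y = cramerRate p y ↔ y = p) := by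
  intro y hy
  rcases eq_or_ne p y with rfl | hpy
  · simp
  have hden : ∀ q ∈ Ioo (0 : ℝ) 1, 0 < q * (1 - q) * -log q := fun q hq =>
    mul_pos (mul_pos hq.1 (sub_pos.2 hq.2)) (neg_pos.2 (log_neg hq.1 hq.2))
  have hgap : amsRate y y - cramerRate y y < amsRate p y - cramerRate p y := by
    refine apply_lt_apply_of_hasDerivAt_sign_change
      (fun q hq => hasDerivAt_amsRate_sub_cramerRate_left hq hy) hy ?_ ?_ hp hpy
    · intro q hq hqy
      exact div_neg_of_neg_of_pos (by linarith [log_mul_one_sub_lt hq.1 hqy hy.2]) (hden q hq)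
    · intro q hq hyq
      exact div_pos (by linarith [log_mul_one_sub_lt hy.1 hyq hq.2]) (hden q hq)
  simp only [amsRate_self, cramerRate_self, sub_zero] at hgap
  exact ⟨by linarith, ⟨fun h => by linarith, fun h => absurd h.symm hpy⟩⟩
end

section
/- Fix p, y ∈ (0,1). Then, as the integer N tends to infinity, N·[ y^{1/N}·log(y^{1/N}/p^{1/N}) + (1−y^{1/N})·log((1−y^{1/N})/(1−p^{1/N})) ] converges to log(y) − log(p) − log(y)·log(log(y)/log(p)), i.e. to I(y). (This says that N·𝓘_N(y^{1/N}) → I(y), where 𝓘_N is the Bernoulli(p^{1/N}) Cramér rate function, the rate for one stage of the optimal fixed-level N-stage splitting estimator.) -/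
/-!
Write `a = y^{1/N}` and `b = p^{1/N}`. The first summand is exact: `N · a · log (a / b) = a · (log y - log p)`,
which tends to `log y - log p`. For the second, `t ↦ y^t` has derivative `log y` at `0`, so
`N (1 - a) → -log y` and likewise `N (1 - b) → -log p`; hence `(1 - a) / (1 - b) → log y / log p` and
`N (1 - a) log ((1 - a) / (1 - b)) → -log y · log (log y / log p)`.
-/

open Filter Real Topology

lemma tendsto_one_div_natCast_nhdsNE_zero :
    Tendsto (fun N : ℕ => (1 : ℝ) / N) atTop (𝓝[≠] 0) := by
  simp only [one_div]
  exact (tendsto_inv_atTop_nhdsGT_zero.mono_right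
    (nhdsWithin_mono 0 fun _ hx => ne_of_gt hx)).comp tendsto_natCast_atTop_atTop

lemma tendsto_natCast_mul_one_sub_rpow_one_div {y : ℝ} (hy : 0 < y) :
    Tendsto (fun N : ℕ => (N : ℝ) * (1 - y ^ ((1 : ℝ) / N))) atTop (𝓝 (-log y)) := by
  have hderiv : HasDerivAt (fun t : ℝ => y ^ t) (log y) 0 := by
    simpa using (hasStrictDerivAt_const_rpow hy 0).hasDerivAt
  have hslope := (hasDerivAt_iff_tendsto_slope_zero.mp hderiv).comp
    tendsto_one_div_natCast_nhdsNE_zero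
  refine hslope.neg.congr fun N => ?_
  simp only [Function.comp_apply, smul_eq_mul, zero_add, rpow_zero, one_div, inv_inv]
  ring

lemma tendsto_rpow_one_div_natCast {y : ℝ} (hy : 0 < y) :
    Tendsto (fun N : ℕ => y ^ ((1 : ℝ) / N)) atTop (𝓝 1) := by
  have h := ((tendsto_natCast_mul_one_sub_rpow_one_div hy).mul
    tendsto_one_div_atTop_nhds_zero_nat).const_sub 1
  rw [mul_zero, sub_zero] at h
  refine h.congr' ?_
  filter_upwards [eventually_ne_atTop 0] with N hN
  field_simp
  ring

lemma natCast_mul_rate_rpow_one_div {p y : ℝ} (hp : 0 < p) (hy : 0 < y) {N : ℕ} (hN : N ≠ 0) :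
    (N : ℝ) * (y ^ ((1 : ℝ) / N) * log (y ^ ((1 : ℝ) / N) / p ^ ((1 : ℝ) / N)) +
        (1 - y ^ ((1 : ℝ) / N)) * log ((1 - y ^ ((1 : ℝ) / N)) / (1 - p ^ ((1 : ℝ) / N)))) =
      y ^ ((1 : ℝ) / N) * (log y - log p) +
        (N : ℝ) * (1 - y ^ ((1 : ℝ) / N)) *
          log ((1 - y ^ ((1 : ℝ) / N)) / (1 - p ^ ((1 : ℝ) / N))) := by
  rw [log_div (rpow_pos_of_pos hy _).ne' (rpow_pos_of_pos hp _).ne', log_rpow hy, log_rpow hp]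
  field_simp

/-- `N·𝓘_N(y^{1/N}) → I(y)` as `N → ∞`, where `𝓘_N` is the Bernoulli `p^{1/N}`
Cramér rate function and `I` is the AMS rate function. -/
theorem tendsto_staged_rate (p y : ℝ) (hp : p ∈ Set.Ioo (0 : ℝ) 1)
    (hy : y ∈ Set.Ioo (0 : ℝ) 1) :
    Tendsto (fun N : ℕ =>
      (N : ℝ) * (y ^ ((1 : ℝ) / N) * Real.log (y ^ ((1 : ℝ) / N) / p ^ ((1 : ℝ) / N)) +
        (1 - y ^ ((1 : ℝ) / N)) *
          Real.log ((1 - y ^ ((1 : ℝ) / N)) / (1 - p ^ ((1 : ℝ) / N)))))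
      atTop
      (nhds (Real.log y - Real.log p - Real.log y * Real.log (Real.log y / Real.log p))) := by
  have hlp : log p ≠ 0 := (log_neg hp.1 hp.2).ne
  have hly : log y ≠ 0 := (log_neg hy.1 hy.2).ne
  have hy' := tendsto_natCast_mul_one_sub_rpow_one_div hy.1
  have hp' := tendsto_natCast_mul_one_sub_rpow_one_div hp.1
  have hratio : Tendsto (fun N : ℕ => (1 - y ^ ((1 : ℝ) / N)) / (1 - p ^ ((1 : ℝ) / N)))
      atTop (𝓝 (log y / log p)) := by
    rw [← neg_div_neg_eq]
    refine (hy'.div hp' (neg_ne_zero.mpr hlp)).congr' ?_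
    filter_upwards [eventually_ne_atTop 0] with N hN
    exact mul_div_mul_left _ _ (Nat.cast_ne_zero.mpr hN)
  have hlim := ((tendsto_rpow_one_div_natCast hy.1).mul_const (log y - log p)).add
    (hy'.mul (hratio.log (div_ne_zero hly hlp)))
  rw [one_mul, neg_mul, ← sub_eq_add_neg] at hlim
  refine hlim.congr' ?_
  filter_upwards [eventually_ne_atTop 0] with N hN
  exact (natCast_mul_rate_rpow_one_div hp.1 hy.1 hN).symm
end

section
/- Fix ε ∈ (0,1). Then lim_{p→0⁺} (−log(p))·I_p((1+ε)·p) = (log(1+ε))²/2, where for p small enough that (1+ε)·p < 1 one sets I_p(y) = log(y)·log(log(p)/log(y)) + log(y/p). (Equivalently, the AMS large-deviations rate for a relative error ε satisfies I_p((1+ε)p) ~ (log(1+ε))²/(−2·log(p)) as p → 0.) -/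
/-!
With `L = log p → -∞`, `c = log (1 + ε)` and `t = c / L → 0`, the quantity `(-L) · I_p((1 + ε) p)`
equals `L² ((1 + t) log (1 + t) - t)`. Since `(1 + t) log (1 + t) - t = t² / 2 + O(t³)`, this is
`c² / 2 + O(|c|³ / |L|)`.
-/

open Filter

open Real Topology

lemma abs_one_add_mul_log_one_add_sub_le {t : ℝ} (ht : |t| ≤ 1 / 2) :
    |(1 + t) * log (1 + t) - t - t ^ 2 / 2| ≤ 4 * |t| ^ 3 := by
  set r := log (1 + t) - t + t ^ 2 / 2
  have hr : |r| ≤ |t| ^ 3 / (1 - |t|) := by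
    have h := abs_log_sub_add_sum_range_le (x := -t) (by rw [abs_neg]; linarith) 2
    norm_num [Finset.sum_range_succ] at h
    convert h using 2
    ring
  have hr' : |r| ≤ 2 * |t| ^ 3 := by
    rw [le_div_iff₀ (by linarith)] at hr
    nlinarith [abs_nonneg t, pow_nonneg (abs_nonneg t) 3]
  have h1t : |1 + t| ≤ 3 / 2 := (abs_add_le _ _).trans (by rw [abs_one]; linarith)
  calc |(1 + t) * log (1 + t) - t - t ^ 2 / 2| = |(1 + t) * r - t ^ 3 / 2| := by
        congr 1; simp only [r]; ring
    _ ≤ |1 + t| * |r| + |t| ^ 3 / 2 := by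
        rw [← abs_mul, show |t| ^ 3 / 2 = |t ^ 3 / 2| by simp [abs_div, abs_pow]]
        exact abs_sub _ _
    _ ≤ 4 * |t| ^ 3 := by nlinarith [abs_nonneg r, abs_nonneg t, pow_nonneg (abs_nonneg t) 3]

lemma tendsto_sq_mul_one_add_mul_log_one_add_sub_atBot (c : ℝ) :
    Tendsto (fun L : ℝ => L ^ 2 * ((1 + c / L) * log (1 + c / L) - c / L)) atBot
      (𝓝 (c ^ 2 / 2)) := by
  have hbound : ∀ᶠ L : ℝ in atBot,
      |L ^ 2 * ((1 + c / L) * log (1 + c / L) - c / L) - c ^ 2 / 2| ≤ 4 * |c| ^ 3 / |L| := by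
    filter_upwards [eventually_le_atBot (-(2 * |c|) - 1)] with L hL
    have hL0 : L ≠ 0 := by intro h; subst h; linarith [abs_nonneg c]
    have habsL : 0 < |L| := abs_pos.2 hL0
    have hsmall : |c / L| ≤ 1 / 2 := by
      rw [abs_div, div_le_iff₀ habsL, abs_of_neg (a := L) (by linarith [abs_nonneg c])]
      linarith
    have hsplit : L ^ 2 * ((1 + c / L) * log (1 + c / L) - c / L) - c ^ 2 / 2
        = L ^ 2 * ((1 + c / L) * log (1 + c / L) - c / L - (c / L) ^ 2 / 2) := by
      field_simp
    rw [hsplit, abs_mul, abs_pow]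
    calc |L| ^ 2 * |(1 + c / L) * log (1 + c / L) - c / L - (c / L) ^ 2 / 2|
        ≤ |L| ^ 2 * (4 * |c / L| ^ 3) := by
          gcongr; exact abs_one_add_mul_log_one_add_sub_le hsmall
      _ = 4 * |c| ^ 3 / |L| := by rw [abs_div]; field_simp
  have hdecay : Tendsto (fun L : ℝ => 4 * |c| ^ 3 / |L|) atBot (𝓝 0) :=
    tendsto_const_nhds.div_atTop tendsto_abs_atBot_atTop
  rw [tendsto_iff_norm_sub_tendsto_zero]
  exact squeeze_zero' (.of_forall fun _ => norm_nonneg _) hbound hdecay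

lemma neg_log_mul_amsRate_mul {a p : ℝ} (ha : a ≠ 0) (hp : p ≠ 0) (hlog : log p ≠ 0) :
    -log p * amsRate p (a * p)
      = log p ^ 2 * ((1 + log a / log p) * log (1 + log a / log p) - log a / log p) := by
  have hu : 1 + log a / log p = (log a + log p) / log p := by field_simp; ring
  rw [amsRate, log_mul ha hp, mul_div_cancel_right₀ _ hp, hu,
    show log p / (log a + log p) = ((log a + log p) / log p)⁻¹ by rw [inv_div], log_inv]
  field_simp
  ring

/-- As `p → 0⁺` (along `(0,1)`), `(−log p)·I_p((1+ε)p) → (log(1+ε))²/2`. -/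
theorem tendsto_amsRate_relative_error (ε : ℝ) (hε : ε ∈ Set.Ioo (0 : ℝ) 1) :
    Tendsto (fun p : ℝ => (-Real.log p) * amsRate p ((1 + ε) * p))
      (nhdsWithin 0 (Set.Ioo (0 : ℝ) 1))
      (nhds ((Real.log (1 + ε)) ^ 2 / 2)) := by
  have hlog : Tendsto log (𝓝[Set.Ioo 0 1] 0) atBot :=
    tendsto_log_nhdsGT_zero.mono_left (nhdsWithin_mono _ Set.Ioo_subset_Ioi_self)
  refine ((tendsto_sq_mul_one_add_mul_log_one_add_sub_atBot (log (1 + ε))).comp hlog).congr' ?_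
  filter_upwards [self_mem_nhdsWithin] with p hp
  exact (neg_log_mul_amsRate_mul (by linarith [hε.1]) hp.1.ne' (log_neg hp.1 hp.2).ne).symm
end

section
/- Fix integers n > k ≥ 1, a real λ, and a real a > 0. The smooth function x ↦ Θ_{n,k}(λ;x) satisfies, for every x ∈ ℝ, the homogeneous linear ordinary differential equation d^k/dx^k Θ_{n,k}(λ;x) = Σ_{m=0}^{k−1} r_m^{n,k}·d^m/dx^m Θ_{n,k}(λ;x). -/
/-- `f_{n,ℓ}(y;x)`: the density at `y` of the `ℓ`-th order statistic of `n` i.i.d.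
unit-rate exponential random variables conditioned to exceed `x`. -/
noncomputable def amsDensity (n ℓ : ℕ) (x y : ℝ) : ℝ :=
  (ℓ : ℝ) * (n.choose ℓ) * (1 - Real.exp (-(y - x))) ^ (ℓ - 1) *
    Real.exp (-((n : ℝ) - ℓ + 1) * (y - x))

/-- `F_{n,ℓ}(a;x)`, with the convention `F_{n,0}(a;x) = 1`. -/
noncomputable def amsCDF (n ℓ : ℕ) (a x : ℝ) : ℝ :=
  if ℓ = 0 then 1 else ∫ u in (0 : ℝ)..(a - x), amsDensity n ℓ 0 u

/-- `Θ_{n,k}(λ;x) = Σ_{ℓ=0}^{k−1} (1−ℓ/n)^{nλ}·(F_{n,ℓ}(a;x) − F_{n,ℓ+1}(a;x))`. -/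
noncomputable def amsTheta (n k : ℕ) (a l x : ℝ) : ℝ :=
  ∑ ℓ ∈ Finset.range k, (1 - (ℓ : ℝ) / n) ^ ((n : ℝ) * l) *
    (amsCDF n ℓ a x - amsCDF n (ℓ + 1) a x)

/-!
Integrating `f_{n,ℓ} - f_{n,ℓ+1}` gives
`F_{n,ℓ}(a;x) - F_{n,ℓ+1}(a;x) = C(n,ℓ) (1 - e^{-(a-x)})^ℓ e^{-(n-ℓ)(a-x)}`, which the binomial
theorem expands into a combination of `e^{(n-i)x}`, `0 ≤ i ≤ ℓ`. So `Θ_{n,k}(λ;·)` is a linear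
combination of the exponentials `e^{(n-i)x}`, `i < k`, and their frequencies `n - i` are roots of
the characteristic polynomial `(ν-n)⋯(ν-n+k-1)` of the equation.
-/

open Finset Real

theorem Nat.cast_succ_mul_choose_succ {R : Type*} [CommRing R] (n ℓ : ℕ) :
    ((ℓ : R) + 1) * n.choose (ℓ + 1) = ((n : R) - ℓ) * n.choose ℓ := by
  rcases le_or_gt ℓ n with hℓ | hℓ
  · have h := congrArg (Nat.cast (R := R)) (Nat.choose_succ_right_eq n ℓ)
    push_cast [Nat.cast_sub hℓ] at h
    linear_combination h
  · simp [Nat.choose_eq_zero_of_lt hℓ, Nat.choose_eq_zero_of_lt (hℓ.trans (Nat.lt_succ_self ℓ))]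

/-- The probability that exactly `ℓ` of `n` i.i.d. unit exponentials lie below `u`. -/
noncomputable def amsPsi (n ℓ : ℕ) (u : ℝ) : ℝ :=
  n.choose ℓ * (1 - exp (-u)) ^ ℓ * exp (-((n : ℝ) - ℓ) * u)

theorem hasDerivAt_amsPsi (n ℓ : ℕ) (u : ℝ) :
    HasDerivAt (amsPsi n ℓ) (amsDensity n ℓ 0 u - amsDensity n (ℓ + 1) 0 u) u := by
  have hpow : HasDerivAt (fun u ↦ (1 - exp (-u)) ^ ℓ)
      (ℓ * (1 - exp (-u)) ^ (ℓ - 1) * exp (-u)) u := by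
    simpa using ((hasDerivAt_neg u).exp.const_sub 1).fun_pow ℓ
  have hexp : HasDerivAt (fun u ↦ exp (-((n : ℝ) - ℓ) * u))
      (exp (-((n : ℝ) - ℓ) * u) * -((n : ℝ) - ℓ)) u := by
    simpa using ((hasDerivAt_id u).const_mul (-((n : ℝ) - ℓ))).exp
  refine ((hpow.const_mul (n.choose ℓ : ℝ)).fun_mul hexp).congr_deriv ?_
  have hsplit : exp (-((n : ℝ) - ℓ + 1) * u) = exp (-u) * exp (-((n : ℝ) - ℓ) * u) := by
    rw [← exp_add]; ring_nf
  simp only [amsDensity, sub_zero, Nat.add_sub_cancel, hsplit]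
  push_cast
  rw [show (n : ℝ) - (ℓ + 1) + 1 = n - ℓ by ring]
  linear_combination (1 - exp (-u)) ^ ℓ * exp (-((n : ℝ) - ℓ) * u) *
    Nat.cast_succ_mul_choose_succ (R := ℝ) n ℓ

theorem amsCDF_sub_amsCDF_succ (n ℓ : ℕ) (a x : ℝ) :
    amsCDF n ℓ a x - amsCDF n (ℓ + 1) a x = amsPsi n ℓ (a - x) := by
  have hint (j : ℕ) : IntervalIntegrable (amsDensity n j 0) MeasureTheory.volume 0 (a - x) :=
    (by unfold amsDensity; fun_prop : Continuous _).intervalIntegrable _ _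
  have hftc := intervalIntegral.integral_eq_sub_of_hasDerivAt
    (fun u _ ↦ hasDerivAt_amsPsi n ℓ u) ((hint ℓ).sub (hint (ℓ + 1)))
  rw [intervalIntegral.integral_sub (hint ℓ) (hint (ℓ + 1))] at hftc
  rcases ℓ with _ | ℓ
  · simp [amsCDF, amsDensity, amsPsi] at hftc ⊢
    linarith
  · simp [amsCDF, amsPsi] at hftc ⊢
    linarith

theorem amsPsi_eq_sum_exp (n ℓ : ℕ) (u : ℝ) :
    amsPsi n ℓ u = ∑ i ∈ range (ℓ + 1),
      n.choose ℓ * ℓ.choose i * (-1) ^ (ℓ - i) * exp (-((n : ℝ) - i) * u) := by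
  rw [amsPsi, sub_eq_add_neg, add_pow, mul_sum, sum_mul]
  refine sum_congr rfl fun i hi ↦ ?_
  have hexp : exp (-u) ^ (ℓ - i) * exp (-((n : ℝ) - ℓ) * u) = exp (-((n : ℝ) - i) * u) := by
    rw [← exp_nat_mul, ← exp_add, Nat.cast_sub (Nat.lt_succ_iff.mp (mem_range.mp hi))]
    ring_nf
  rw [neg_pow, ← hexp]
  ring

theorem amsTheta_eq_sum_exp (n k : ℕ) (a l : ℝ) :
    ∃ B : (_ : ℕ) × ℕ → ℝ, ∀ x, amsTheta n k a l x =
      ∑ p ∈ (range k).sigma (fun ℓ ↦ range (ℓ + 1)), B p * exp (((n : ℝ) - p.2) * x) := by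
  refine ⟨fun p ↦ (1 - (p.1 : ℝ) / n) ^ ((n : ℝ) * l) *
    (n.choose p.1 * p.1.choose p.2 * (-1) ^ (p.1 - p.2)) * exp (-((n : ℝ) - p.2) * a), fun x ↦ ?_⟩
  rw [amsTheta, sum_sigma]
  refine sum_congr rfl fun ℓ _ ↦ ?_
  rw [amsCDF_sub_amsCDF_succ, amsPsi_eq_sum_exp, mul_sum]
  refine sum_congr rfl fun i _ ↦ ?_
  rw [show -((n : ℝ) - i) * (a - x) = -((n : ℝ) - i) * a + (n - i) * x by ring, exp_add]
  ring

theorem iteratedDeriv_sum_mul_exp {ι : Type*} (s : Finset ι) (B c : ι → ℝ) (m : ℕ) (x : ℝ) :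
    iteratedDeriv m (fun x ↦ ∑ i ∈ s, B i * exp (c i * x)) x =
      ∑ i ∈ s, B i * c i ^ m * exp (c i * x) := by
  rw [iteratedDeriv_fun_sum fun i _ ↦ by fun_prop]
  simp [mul_assoc]

theorem iteratedDeriv_sum_mul_exp_eq_of_roots {ι : Type*} (s : Finset ι) (B c : ι → ℝ)
    (k : ℕ) (r : ℕ → ℝ) (hc : ∀ i ∈ s, c i ^ k = ∑ m ∈ range k, r m * c i ^ m) (x : ℝ) :
    iteratedDeriv k (fun x ↦ ∑ i ∈ s, B i * exp (c i * x)) x =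
      ∑ m ∈ range k, r m * iteratedDeriv m (fun x ↦ ∑ i ∈ s, B i * exp (c i * x)) x := by
  simp only [iteratedDeriv_sum_mul_exp, mul_sum]
  rw [sum_comm]
  refine sum_congr rfl fun i hi ↦ ?_
  rw [hc i hi, mul_sum, sum_mul]
  exact sum_congr rfl fun m _ ↦ by ring

theorem theta_solves_homogeneous_ODE_general (n k : ℕ) (l a : ℝ) (r : ℕ → ℝ)
    (hr : ∀ ν : ℝ, ν ^ k - ∑ m ∈ Finset.range k, r m * ν ^ m =
      ∏ i ∈ Finset.range k, (ν - n + i)) :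
    ∀ x : ℝ,
      iteratedDeriv k (fun x' => amsTheta n k a l x') x =
        ∑ m ∈ Finset.range k, r m * iteratedDeriv m (fun x' => amsTheta n k a l x') x := by
  have hroot (i : ℕ) (hi : i < k) :
      ((n : ℝ) - i) ^ k = ∑ m ∈ range k, r m * ((n : ℝ) - i) ^ m := by
    have h := hr (n - i)
    rw [prod_eq_zero (mem_range.mpr hi) (by ring)] at h
    linarith
  obtain ⟨B, hB⟩ := amsTheta_eq_sum_exp n k a l
  simp only [hB]
  exact iteratedDeriv_sum_mul_exp_eq_of_roots _ B _ k r fun p hp ↦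
    hroot p.2 (by simp only [mem_sigma, mem_range] at hp; omega)

/-- The smooth function `x ↦ Θ_{n,k}(λ;x)` satisfies the homogeneous linear ODE
`(d^k/dx^k)Θ = Σ_{m<k} r_m^{n,k}·(d^m/dx^m)Θ` on all of `ℝ`, with the coefficients
`r_m^{n,k}` determined by `ν^k − Σ r_m ν^m = (ν−n)⋯(ν−n+k−1)`. -/
theorem theta_solves_homogeneous_ODE (n k : ℕ) (hk : 1 ≤ k) (hkn : k < n)
    (l a : ℝ) (ha : 0 < a) (r : ℕ → ℝ)
    (hr : ∀ ν : ℝ, ν ^ k - ∑ m ∈ Finset.range k, r m * ν ^ m =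
      ∏ i ∈ Finset.range k, (ν - n + i)) :
    ∀ x : ℝ,
      iteratedDeriv k (fun x' => amsTheta n k a l x') x =
        ∑ m ∈ Finset.range k, r m * iteratedDeriv m (fun x' => amsTheta n k a l x') x :=
  theta_solves_homogeneous_ODE_general n k l a r hr
end

section
/- Fix integers 1 ≤ k ≤ n−1. Define real numbers μ_l for 0 ≤ l ≤ k by μ_0 = 1 and μ_{l+1} = −(n−k+l+1)·μ_l, and real numbers r_{m,l} for 0 ≤ m ≤ l ≤ k by: r_{l,l} = −1 for every l, r_{0,l+1} = −(n−k+l+1)·r_{0,l}, and r_{m,l+1} = r_{m−1,l} − (n−k+l+1)·r_{m,l} for 1 ≤ m ≤ l. Then μ_k = (−1)^k·n·(n−1)⋯(n−k+1), and for every ν ∈ ℝ, ν^k − Σ_{m=0}^{k−1} r_{m,k}·ν^m = (ν−n)·(ν−n+1)⋯(ν−n+k−1). -/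
/-- The coefficients `μ_l` and `r_{m,l}` defined by the recursion obtained from
repeatedly differentiating the AMS functional equation satisfy
`μ_k = (−1)^k·n·(n−1)⋯(n−k+1)` and the polynomial identity
`ν^k − Σ_{m<k} r_{m,k}·ν^m = (ν−n)·(ν−n+1)⋯(ν−n+k−1)`. -/
theorem ams_ODE_coefficients (n k : ℕ) (hk : 1 ≤ k) (hkn : k < n)
    (μ : ℕ → ℝ) (r : ℕ → ℕ → ℝ)
    (hμ0 : μ 0 = 1)
    (hμ : ∀ l < k, μ (l + 1) = -((n : ℝ) - k + l + 1) * μ l)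
    (hrdiag : ∀ l ≤ k, r l l = -1)
    (hr0 : ∀ l < k, r 0 (l + 1) = -((n : ℝ) - k + l + 1) * r 0 l)
    (hrm : ∀ m l : ℕ, 1 ≤ m → m ≤ l → l < k →
      r m (l + 1) = r (m - 1) l - ((n : ℝ) - k + l + 1) * r m l) :
    μ k = (-1 : ℝ) ^ k * ∏ i ∈ Finset.range k, ((n : ℝ) - i) ∧
      ∀ ν : ℝ, ν ^ k - ∑ m ∈ Finset.range k, r m k * ν ^ m =
        ∏ i ∈ Finset.range k, (ν - n + i) := by
  have key : ∀ l, l ≤ k →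
      μ l = (-1 : ℝ) ^ l * ∏ j ∈ Finset.range l, ((n : ℝ) - k + j + 1) ∧
      ∀ ν : ℝ, ν ^ l - ∑ m ∈ Finset.range l, r m l * ν ^ m =
        ∏ j ∈ Finset.range l, (ν - ((n : ℝ) - k + j + 1)) := by
    intro l hl
    induction l with
    | zero => simp [hμ0]
    | succ l ih =>
      have hlk : l < k := hl
      obtain ⟨ihμ, ihp⟩ := ih (le_of_lt hlk)
      constructor
      · rw [hμ l hlk, ihμ, Finset.prod_range_succ]
        ring
      · intro ν
        set c : ℝ := (n : ℝ) - k + l + 1 with hc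
        set S : ℝ := ∑ m ∈ Finset.range l, r m l * ν ^ m with hS
        have hT : ∑ m ∈ Finset.range l, r (m + 1) l * ν ^ (m + 1)
            = S - ν ^ l - r 0 l := by
          have h1 := Finset.sum_range_succ' (fun m => r m l * ν ^ m) l
          have h2 := Finset.sum_range_succ (fun m => r m l * ν ^ m) l
          rw [hrdiag l (le_of_lt hlk)] at h2
          simp only [pow_zero, mul_one] at h1
          rw [h2] at h1
          linarith [h1]
        have hsum : ∑ m ∈ Finset.range (l + 1), r m (l + 1) * ν ^ m
            = ν * S - c * S + c * ν ^ l := by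
          rw [Finset.sum_range_succ' (fun m => r m (l + 1) * ν ^ m) l]
          have hterm : ∀ m ∈ Finset.range l, r (m + 1) (l + 1) * ν ^ (m + 1)
              = r m l * ν ^ m * ν - c * (r (m + 1) l * ν ^ (m + 1)) := by
            intro m hm
            rw [Finset.mem_range] at hm
            rw [hrm (m + 1) l (by omega) (by omega) hlk]
            simp only [Nat.add_sub_cancel]
            rw [pow_succ]
            ring
          rw [Finset.sum_congr rfl hterm, Finset.sum_sub_distrib,
            ← Finset.sum_mul, ← Finset.mul_sum, hT, hr0 l hlk, ← hS]
          simp only [pow_zero, mul_one]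
          ring
        rw [hsum, Finset.prod_range_succ, ← ihp, pow_succ]
        ring
  obtain ⟨hμk, hpk⟩ := key k le_rfl
  have hcast : ∀ j ∈ Finset.range k, ((k - 1 - j : ℕ) : ℝ) = (k : ℝ) - 1 - j := by
    intro j hj
    rw [Finset.mem_range] at hj
    rw [Nat.sub_sub, Nat.cast_sub (by omega)]
    push_cast
    ring
  constructor
  · rw [hμk, ← Finset.prod_range_reflect (fun j => (n : ℝ) - j) k]
    congr 1
    apply Finset.prod_congr rfl
    intro j hj
    rw [hcast j hj]
    have hjk : (j : ℝ) < k := by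
      rw [Finset.mem_range] at hj; exact_mod_cast hj
    ring
  · intro ν
    rw [hpk ν, ← Finset.prod_range_reflect (fun j => ν - (n : ℝ) + j) k]
    apply Finset.prod_congr rfl
    intro j hj
    rw [hcast j hj]
    ring
end
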